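/- arXiv:2311.13618 — 3 statements merged into one kernel-verified Lean document; each statement's English description precedes it below -/
import Mathlib

section
/- If n ≥ 1, then for all m ≥ 1 the positive coefficients Aᵢ = (2n)!/(i+2n)! satisfy A₁ + A₂ + ⋯ + Aₘ < 1; consequently Σᵢ₌₀^m Aᵢ e^{iz} ≠ 0 for all purely imaginary z, i.e. g_{m,n} has no poles on the imaginary axis. -/
open Finset

lemma fact_geom_bound (n : ℕ) (hn : 1 ≤ n) :
    ∀ i : ℕ, Nat.factorial (2 * n) * 3 ^ i ≤ Nat.factorial (i + 2 * n) := by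
  intro i
  induction i with
  | zero => simp
  | succ i ih =>
    have h3 : 3 ≤ i + 1 + 2 * n := by omega
    calc Nat.factorial (2 * n) * 3 ^ (i + 1)
        = Nat.factorial (2 * n) * 3 ^ i * 3 := by ring
      _ ≤ Nat.factorial (i + 2 * n) * 3 := by
          exact Nat.mul_le_mul_right 3 ih
      _ ≤ Nat.factorial (i + 2 * n) * (i + 1 + 2 * n) := by
          exact Nat.mul_le_mul_left _ h3
      _ = Nat.factorial (i + 1 + 2 * n) := by
          rw [show i + 1 + 2 * n = (i + 2 * n) + 1 by ring, Nat.factorial_succ]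
          ring

lemma geom_third_sum (m : ℕ) :
    ∑ i ∈ Icc 1 m, ((1:ℝ)/3) ^ i = 1/2 - (1/2) * (1/3) ^ m := by
  induction m with
  | zero => simp
  | succ m ih =>
    rw [Finset.sum_Icc_succ_top (by omega : 1 ≤ m + 1), ih]
    ring

/-- If `n ≥ 1` and `m ≥ 1`, then `A₁ + ⋯ + Aₘ < 1` for `Aᵢ = (2n)!/(i+2n)!`, and
consequently `Σᵢ₌₀^m Aᵢ e^{iz} ≠ 0` for all purely imaginary `z`. -/
theorem coefficient_sum_lt_one_and_no_poles_on_imaginary_axis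
    (m n : ℕ) (hm : 1 ≤ m) (hn : 1 ≤ n)
    (A : ℕ → ℝ)
    (hA : ∀ i, A i = (Nat.factorial (2 * n) : ℝ) / (Nat.factorial (i + 2 * n))) :
    (∑ i ∈ Icc 1 m, A i) < 1 ∧
      ∀ z : ℂ, z.re = 0 →
        (∑ i ∈ range (m + 1), (A i : ℂ) * Complex.exp (i * z)) ≠ 0 := by
  have hAbound : ∀ i : ℕ, A i ≤ ((1:ℝ)/3) ^ i := by
    intro i
    rw [hA i, div_le_iff₀ (by positivity : (0:ℝ) < (Nat.factorial (i + 2 * n) : ℝ))]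
    rw [div_pow, one_pow, div_mul_eq_mul_div, le_div_iff₀ (by positivity : (0:ℝ) < 3 ^ i)]
    rw [one_mul]
    exact_mod_cast fact_geom_bound n hn i
  have hApos : ∀ i : ℕ, 0 ≤ A i := by
    intro i; rw [hA i]; positivity
  have hsum : (∑ i ∈ Icc 1 m, A i) < 1 := by
    calc (∑ i ∈ Icc 1 m, A i) ≤ ∑ i ∈ Icc 1 m, ((1:ℝ)/3) ^ i :=
          Finset.sum_le_sum fun i _ => hAbound i
      _ = 1/2 - (1/2) * (1/3) ^ m := geom_third_sum m
      _ < 1 := by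
          have : (0:ℝ) < (1/3) ^ m := by positivity
          linarith
  refine ⟨hsum, ?_⟩
  intro z hz h0
  have hA0 : A 0 = 1 := by
    rw [hA 0]
    rw [zero_add, div_self (by positivity)]
  have hsplit : range (m + 1) = insert 0 (Icc 1 m) := by
    ext x
    simp only [Finset.mem_range, Finset.mem_insert, Finset.mem_Icc]
    omega
  rw [hsplit, Finset.sum_insert (by simp)] at h0
  have hterm0 : (A 0 : ℂ) * Complex.exp ((0:ℕ) * z) = 1 := by
    simp [hA0]
  rw [hterm0] at h0
  have h1 : (1:ℂ) = -∑ i ∈ Icc 1 m, (A i : ℂ) * Complex.exp (i * z) := by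
    linear_combination h0
  have habs : (1:ℝ) ≤ ∑ i ∈ Icc 1 m, A i := by
    have hnorm : ∀ i : ℕ, ‖(A i : ℂ) * Complex.exp (i * z)‖ = A i := by
      intro i
      rw [norm_mul, Complex.norm_exp]
      have : ((i : ℂ) * z).re = 0 := by
        simp [Complex.mul_re, hz]
      rw [this, Real.exp_zero, mul_one, Complex.norm_real, Real.norm_of_nonneg (hApos i)]
    calc (1:ℝ) = ‖(1:ℂ)‖ := by simp
      _ = ‖∑ i ∈ Icc 1 m, (A i : ℂ) * Complex.exp (i * z)‖ := by
          rw [h1, norm_neg]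
      _ ≤ ∑ i ∈ Icc 1 m, ‖(A i : ℂ) * Complex.exp (i * z)‖ := norm_sum_le _ _
      _ = ∑ i ∈ Icc 1 m, A i := by
          exact Finset.sum_congr rfl fun i _ => hnorm i
  linarith
end

section
/- There exists a sequence (m_k) taking values in {0,1}, with m₁ = m₂ = m₃ = 0 and infinitely many m_k = 1, such that the piecewise linear function h: [0,∞) → [0,∞) with h(0) = 0 and slope m_k on [2π(k−1), 2πk] satisfies h(x) = (log x)² + O(1) as x → ∞; moreover the indices k_i with m_{k_i} = 1 satisfy 2πk_i = (1 + O(1/k_i))·e^{(2πi)^{1/2}} as i → ∞. -/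
open Filter Asymptotics Real

set_option maxHeartbeats 1000000

noncomputable def fA (i : ℕ) : ℝ := Real.exp (Real.sqrt (2*π*i)) / (2*π)

noncomputable def kA (i : ℕ) : ℕ := if i < 3 then i + 4 else ⌈fA i⌉₊

open Classical in
noncomputable def mA (k : ℕ) : ℕ := if ∃ i, kA i = k then 1 else 0

lemma c_big : (6:ℝ) < 2*π := by nlinarith [Real.pi_gt_three]
lemma c_small : 2*π < (7:ℝ) := by nlinarith [Real.pi_lt_d2]
lemma c_pos : (0:ℝ) < 2*π := by linarith [c_big]

lemma fA_pos (i : ℕ) : 0 < fA i := by unfold fA; positivity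

lemma fA_mono : Monotone fA := by
  intro i j hij
  unfold fA
  apply (div_le_div_iff_of_pos_right c_pos).2
  apply Real.exp_le_exp.2
  exact Real.sqrt_le_sqrt (by have h : (i:ℝ) ≤ j := by exact_mod_cast hij
                              nlinarith [c_pos])

lemma exp_sq (a : ℝ) (ha : 0 ≤ a) : (1 + a/2)^2 ≤ Real.exp a := by
  have h := Real.add_one_le_exp (a/2)
  have h2 : Real.exp (a/2) * Real.exp (a/2) = Real.exp a := by
    rw [← Real.exp_add]; ring_nf
  nlinarith [mul_le_mul h h (by linarith : (0:ℝ) ≤ a/2+1) (Real.exp_pos (a/2)).le]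

lemma exp_four : (50:ℝ) ≤ Real.exp 4 := by
  have h1 : Real.exp 1 * Real.exp 1 * (Real.exp 1 * Real.exp 1) = Real.exp 4 := by
    rw [← Real.exp_add, ← Real.exp_add]
    norm_num
  have e1 := Real.exp_one_gt_d9
  have h2 : (7.38:ℝ) < Real.exp 1 * Real.exp 1 := by nlinarith
  nlinarith [h2]


lemma sqrt_c3 : (4:ℝ) ≤ Real.sqrt (2*π*3) := by
  rw [show (4:ℝ) = Real.sqrt 16 by
    rw [show (16:ℝ) = 4^2 by norm_num, Real.sqrt_sq]; norm_num]
  exact Real.sqrt_le_sqrt (by nlinarith [Real.pi_gt_three])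

lemma fA_three : 6 < fA 3 := by
  unfold fA
  rw [lt_div_iff₀ c_pos]
  have h2 : Real.exp 4 ≤ Real.exp (Real.sqrt (2*π*(3:ℕ))) := by
    apply Real.exp_le_exp.2
    simpa using sqrt_c3
  nlinarith [exp_four, c_small]

lemma fA_gap (i : ℕ) (hi : 3 ≤ i) : fA i + 1 ≤ fA (i+1) := by
  set a := Real.sqrt (2*π*i) with hadef
  set b := Real.sqrt (2*π*(i+1)) with hbdef
  have hia : (3:ℝ) ≤ (i:ℝ) := by exact_mod_cast hi
  have ha2 : a^2 = 2*π*i := Real.sq_sqrt (by positivity)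
  have hb2 : b^2 = 2*π*(i+1) := Real.sq_sqrt (by positivity)
  have ha0 : 0 ≤ a := Real.sqrt_nonneg _
  have hb0 : 0 ≤ b := Real.sqrt_nonneg _
  have hab : a ≤ b := Real.sqrt_le_sqrt (by nlinarith [c_pos])
  have ha4 : 4 ≤ a := by nlinarith [c_big]
  have hble : b ≤ a + 1 := by nlinarith [c_small]
  have hexp : Real.exp a * (b - a) ≤ Real.exp b - Real.exp a := by
    have h1 := Real.add_one_le_exp (b - a)
    have h2 : Real.exp a * Real.exp (b - a) = Real.exp b := by
      rw [← Real.exp_add]; ring_nf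
    nlinarith [Real.exp_pos a]
  have hea : a + b ≤ Real.exp a := by
    have := exp_sq a ha0
    nlinarith
  have hdiff : (b - a) * (a + b) = 2*π := by
    have : b^2 - a^2 = 2*π := by rw [ha2, hb2]; push_cast; ring
    nlinarith
  have hmain : Real.exp a + 2*π ≤ Real.exp b := by
    nlinarith [Real.exp_pos a]
  show Real.exp a / (2*π) + 1 ≤ Real.exp (Real.sqrt (2*π*((i:ℕ)+1:ℕ))) / (2*π)
  have hcast : ((((i:ℕ)+1:ℕ)):ℝ) = (i:ℝ) + 1 := by push_cast; ring
  rw [hcast, ← hbdef]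
  rw [div_add' _ _ _ (ne_of_gt c_pos), div_le_div_iff₀ c_pos c_pos]
  nlinarith [hmain, c_pos]

lemma kA_eq (i : ℕ) (hi : 3 ≤ i) : kA i = ⌈fA i⌉₊ := by
  unfold kA; rw [if_neg (by omega)]

lemma kA_ge_f (i : ℕ) (hi : 3 ≤ i) : fA i ≤ (kA i : ℝ) := by
  rw [kA_eq i hi]; exact Nat.le_ceil _

lemma kA_lt_f (i : ℕ) (hi : 3 ≤ i) : (kA i : ℝ) < fA i + 1 := by
  rw [kA_eq i hi]; exact Nat.ceil_lt_add_one (fA_pos i).le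

lemma kA_four (i : ℕ) : 4 ≤ kA i := by
  by_cases h : i < 3
  · unfold kA; rw [if_pos h]; omega
  · push_neg at h
    have h1 : (6:ℝ) < (kA i : ℝ) :=
      lt_of_lt_of_le (lt_of_lt_of_le fA_three (fA_mono h)) (kA_ge_f i h)
    have : (6:ℕ) < kA i := by exact_mod_cast h1
    omega

lemma kA_mono : StrictMono kA := by
  apply strictMono_nat_of_lt_succ
  intro i
  rcases lt_trichotomy i 2 with h | h | h
  · unfold kA; rw [if_pos (by omega), if_pos (by omega)]; omega
  · subst h
    show kA 2 < kA 3
    have h1 : (6:ℝ) < (kA 3 : ℝ) := lt_of_lt_of_le fA_three (kA_ge_f 3 le_rfl)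
    have h2 : kA 2 = 6 := by unfold kA; rw [if_pos (by omega)]
    have : (6:ℕ) < kA 3 := by exact_mod_cast h1
    omega
  · have hi : 3 ≤ i := by omega
    have h1 : (kA i : ℝ) < (kA (i+1) : ℝ) :=
      lt_of_lt_of_le (kA_lt_f i hi)
        (le_trans (fA_gap i hi) (kA_ge_f (i+1) (by omega)))
    exact_mod_cast h1

lemma log_c_nonneg (n : ℕ) (hn : 1 ≤ n) : 0 ≤ Real.log (2*π*n) := by
  apply Real.log_nonneg
  have : (1:ℝ) ≤ (n:ℝ) := by exact_mod_cast hn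
  nlinarith [c_big]

lemma key_iff (i n : ℕ) (hn : 1 ≤ n) :
    fA i ≤ (n:ℝ) ↔ 2*π*i ≤ (Real.log (2*π*n))^2 := by
  have hn' : (0:ℝ) < 2*π*n := by
    have : (1:ℝ) ≤ (n:ℝ) := by exact_mod_cast hn
    nlinarith [c_pos]
  unfold fA
  rw [div_le_iff₀ c_pos, show (n:ℝ)*(2*π) = 2*π*n by ring,
    ← Real.le_log_iff_exp_le hn', Real.sqrt_le_left (log_c_nonneg n hn)]

open Classical in
lemma sum_eq_card (n : ℕ) :
    ∑ k ∈ Finset.range n, mA (k+1)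
      = ((Finset.range n).filter (fun k => ∃ i, kA i = k+1)).card := by
  rw [Finset.card_filter]
  apply Finset.sum_congr rfl
  intro k _
  unfold mA
  congr 1

open Classical in
lemma count_upper (n : ℕ) (hn : 1 ≤ n) :
    (∑ k ∈ Finset.range n, (mA (k+1) : ℝ)) ≤ (Real.log (2*π*n))^2/(2*π) + 4 := by
  set T : ℝ := (Real.log (2*π*n))^2/(2*π) with hT
  have hT0 : 0 ≤ T := by positivity
  set B : ℕ := ⌊T⌋₊ + 3 with hB
  have hclaim : ∀ i : ℕ, kA i ≤ n → i < B + 1 := by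
    intro i hi
    by_cases h3 : i < 3
    · omega
    · push_neg at h3
      have h1 : fA i ≤ (n:ℝ) := (kA_ge_f i h3).trans (by exact_mod_cast hi)
      have h2 : 2*π*i ≤ (Real.log (2*π*n))^2 := (key_iff i n hn).1 h1
      have h4 : (i:ℝ) ≤ T := by
        rw [hT, le_div_iff₀ c_pos]; nlinarith [c_pos]
      have := Nat.le_floor h4
      omega
  have hcard : ((Finset.range n).filter (fun k => ∃ i, kA i = k+1)).card
      ≤ (Finset.range (B+1)).card := by
    apply Finset.card_le_card_of_injOn
      (fun k => if h : ∃ i, kA i = k+1 then Classical.choose h else 0)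
    · intro k hk
      simp only [Finset.mem_coe, Finset.mem_filter, Finset.mem_range] at hk
      obtain ⟨hkn, hex⟩ := hk
      beta_reduce
      rw [dif_pos hex]
      have hspec := Classical.choose_spec hex
      simp only [Finset.mem_coe, Finset.mem_range]
      exact hclaim _ (by omega)
    · intro a ha b hb hab
      simp only [Finset.mem_coe, Finset.mem_filter] at ha hb
      simp only [] at hab
      rw [dif_pos ha.2, dif_pos hb.2] at hab
      have h1 := Classical.choose_spec ha.2
      have h2 := Classical.choose_spec hb.2
      rw [hab] at h1; omega
  rw [show (∑ k ∈ Finset.range n, (mA (k+1) : ℝ))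
      = ((∑ k ∈ Finset.range n, mA (k+1) : ℕ) : ℝ) by push_cast; rfl,
    sum_eq_card]
  have hBle : ((B:ℝ)+1) ≤ T + 4 := by
    have := Nat.floor_le hT0
    rw [hB]; push_cast; linarith
  calc (((Finset.range n).filter (fun k => ∃ i, kA i = k+1)).card : ℝ)
      ≤ ((Finset.range (B+1)).card : ℝ) := by exact_mod_cast hcard
    _ = (B:ℝ)+1 := by rw [Finset.card_range]; push_cast; ring
    _ ≤ T + 4 := hBle

open Classical in
lemma count_lower (n : ℕ) (hn : 1 ≤ n)
    (hn3 : 3*(2*π) ≤ (Real.log (2*π*n))^2) :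
    (Real.log (2*π*n))^2/(2*π) ≤ ∑ k ∈ Finset.range n, (mA (k+1) : ℝ) := by
  set T : ℝ := (Real.log (2*π*n))^2/(2*π) with hT
  have hT0 : 0 ≤ T := by positivity
  set j : ℕ := ⌊T⌋₊ with hj
  have hj3 : 3 ≤ j := by
    apply Nat.le_floor
    rw [le_div_iff₀ c_pos]; push_cast; nlinarith
  have hkjn : kA j ≤ n := by
    rw [kA_eq j hj3, Nat.ceil_le]
    rw [key_iff j n hn]
    have h4 : (j:ℝ) ≤ T := Nat.floor_le hT0
    rw [hT, le_div_iff₀ c_pos] at h4; nlinarith [c_pos]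
  have hcard : (Finset.range (j+1)).card
      ≤ ((Finset.range n).filter (fun k => ∃ i, kA i = k+1)).card := by
    apply Finset.card_le_card_of_injOn (fun i => kA i - 1)
    · intro i hi
      simp only [Finset.mem_coe, Finset.mem_range] at hi
      have h1 : kA i ≤ n := le_trans (kA_mono.monotone (by omega : i ≤ j)) hkjn
      have h2 := kA_four i
      simp only [Finset.mem_coe, Finset.mem_filter, Finset.mem_range]
      exact ⟨by omega, ⟨i, by omega⟩⟩
    · intro a _ b _ hab
      simp only [] at hab
      have h1 := kA_four a; have h2 := kA_four b
      exact kA_mono.injective (by omega)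
  rw [show (∑ k ∈ Finset.range n, (mA (k+1) : ℝ))
      = ((∑ k ∈ Finset.range n, mA (k+1) : ℕ) : ℝ) by push_cast; rfl,
    sum_eq_card]
  have : T < (j:ℝ) + 1 := Nat.lt_floor_add_one T
  have h5 : ((j:ℕ)+1 : ℝ) ≤ (((Finset.range n).filter (fun k => ∃ i, kA i = k+1)).card : ℝ) := by
    rw [show ((Finset.range (j+1)).card) = j+1 from Finset.card_range _] at hcard
    exact_mod_cast hcard
  linarith

noncomputable def HA (n : ℕ) : ℝ := 2*π * ∑ k ∈ Finset.range n, (mA (k+1) : ℝ)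
noncomputable def hA (x : ℝ) : ℝ :=
  HA ⌊x/(2*π)⌋₊ + (mA (⌊x/(2*π)⌋₊ + 1) : ℝ) * (x - 2*π*(⌊x/(2*π)⌋₊:ℝ))

lemma mA_le_one (k : ℕ) : mA k ≤ 1 := by
  unfold mA; split <;> omega

lemma mA_nonneg (k : ℕ) : (0:ℝ) ≤ (mA k : ℝ) := by positivity

lemma floor_cmul (n : ℕ) : ⌊(2*π*(n:ℝ))/(2*π)⌋₊ = n := by
  rw [mul_comm, mul_div_assoc, div_self (ne_of_gt c_pos), mul_one, Nat.floor_natCast]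

lemma hA_node (n : ℕ) : hA (2*π*(n:ℝ)) = HA n := by
  unfold hA
  rw [floor_cmul]
  ring

lemma hA_zero : hA 0 = 0 := by
  have h := hA_node 0
  simp only [Nat.cast_zero, mul_zero] at h
  rw [h]; unfold HA; simp

lemma HA_succ (n : ℕ) : HA (n+1) = HA n + 2*π*(mA (n+1) : ℝ) := by
  unfold HA
  rw [Finset.sum_range_succ]
  ring

lemma hA_piece (k : ℕ) (hk : 1 ≤ k) (x : ℝ)
    (hx : x ∈ Set.Icc (2*π*((k:ℝ)-1)) (2*π*(k:ℝ))) :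
    hA x = hA (2*π*((k:ℝ)-1)) + (mA k : ℝ) * (x - 2*π*((k:ℝ)-1)) := by
  obtain ⟨K, rfl⟩ : ∃ K, k = K + 1 := ⟨k-1, by omega⟩
  have hcast : ((K+1:ℕ):ℝ) - 1 = (K:ℝ) := by push_cast; ring
  rw [hcast]
  obtain ⟨hx1, hx2⟩ := hx
  rw [hcast] at hx1
  rw [hA_node K]
  rcases eq_or_lt_of_le hx2 with heq | hlt
  · subst heq
    rw [show (2*π*((K+1:ℕ):ℝ)) = 2*π*(((K+1:ℕ)):ℝ) from rfl, hA_node (K+1), HA_succ]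
    push_cast
    ring
  · have hx0' : (0:ℝ) ≤ x := le_trans (by positivity) hx1
    have hfl : ⌊x/(2*π)⌋₊ = K := by
      rw [Nat.floor_eq_iff (div_nonneg hx0' c_pos.le)]
      constructor
      · rw [le_div_iff₀ c_pos]; linarith [hx1]
      · rw [div_lt_iff₀ c_pos]
        push_cast at hlt ⊢
        linarith [hlt]
    unfold hA
    rw [hfl]

lemma main_bound (x : ℝ) (hx : Real.exp 10 ≤ x) : |hA x - (Real.log x)^2| ≤ 100 := by
  have h50 : (50:ℝ) ≤ x := le_trans (le_trans exp_four (Real.exp_le_exp.2 (by norm_num))) hx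
  have hx0 : (0:ℝ) < x := by linarith
  set n := ⌊x/(2*π)⌋₊ with hn
  have hn1 : 2*π*(n:ℝ) ≤ x := by
    have := Nat.floor_le (by positivity : (0:ℝ) ≤ x/(2*π))
    rw [← hn] at this
    calc 2*π*(n:ℝ) ≤ 2*π*(x/(2*π)) := by nlinarith [c_pos]
      _ = x := by field_simp
  have hn2 : x < 2*π*((n:ℝ)+1) := by
    have := Nat.lt_floor_add_one (x/(2*π))
    rw [← hn] at this
    calc x = 2*π*(x/(2*π)) := by field_simp
      _ < 2*π*((n:ℝ)+1) := by nlinarith [c_pos]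
  have hnn : 1 ≤ n := by
    by_contra hcon
    push_neg at hcon
    interval_cases n
    · simp at hn2; nlinarith [c_small]
  have hnn' : (1:ℝ) ≤ (n:ℝ) := by exact_mod_cast hnn
  have hhalf : x/2 ≤ 2*π*(n:ℝ) := by nlinarith [c_small]
  have hcn_pos : (0:ℝ) < 2*π*(n:ℝ) := by nlinarith [c_pos]
  have hlogx : 10 ≤ Real.log x := (Real.le_log_iff_exp_le hx0).2 hx
  have hlog2 : Real.log 2 ≤ 1 := by
    nlinarith [Real.log_le_sub_one_of_pos (by norm_num : (0:ℝ) < 2)]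
  have hL9 : 9 ≤ Real.log (2*π*(n:ℝ)) := by
    have h1 : Real.log (x/2) ≤ Real.log (2*π*(n:ℝ)) := Real.log_le_log (by positivity) hhalf
    rw [Real.log_div (ne_of_gt hx0) (by norm_num)] at h1
    linarith
  have hLlt : Real.log (2*π*(n:ℝ)) ≤ Real.log x := Real.log_le_log hcn_pos hn1
  have hL3 : 3*(2*π) ≤ (Real.log (2*π*(n:ℝ)))^2 := by nlinarith [c_small]
  have hup := count_upper n hnn
  have hlo := count_lower n hnn hL3
  have hfs : (Real.log (2*π*(n:ℝ)))^2/(2*π)*(2*π) = (Real.log (2*π*(n:ℝ)))^2 := by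
    field_simp
  have hS0 : (0:ℝ) ≤ ∑ k ∈ Finset.range n, (mA (k+1):ℝ) := by positivity
  have hHA1 : (Real.log (2*π*(n:ℝ)))^2 ≤ HA n := by
    unfold HA
    nlinarith [c_pos, hlo]
  have hHA2 : HA n ≤ (Real.log (2*π*(n:ℝ)))^2 + 8*π := by
    unfold HA
    nlinarith [c_pos, hup]
  have hdiff : 0 ≤ hA x - HA n ∧ hA x - HA n ≤ 2*π := by
    have h1 : hA x = HA n + (mA (n+1) : ℝ) * (x - 2*π*(n:ℝ)) := by
      unfold hA; rw [← hn]
    have h2 : (0:ℝ) ≤ x - 2*π*(n:ℝ) := by linarith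
    have h3 : x - 2*π*(n:ℝ) ≤ 2*π := by linarith
    have h4 : (mA (n+1):ℝ) ≤ 1 := by exact_mod_cast mA_le_one (n+1)
    constructor
    · rw [h1]; nlinarith [mA_nonneg (n+1)]
    · rw [h1]; nlinarith [mA_nonneg (n+1)]
  have hlogdiff : Real.log x - Real.log (2*π*(n:ℝ)) ≤ 14/x := by
    have h1 : Real.log x - Real.log (2*π*(n:ℝ)) = Real.log (x/(2*π*(n:ℝ))) := by
      rw [Real.log_div (ne_of_gt hx0) (ne_of_gt hcn_pos)]
    have h2 : Real.log (x/(2*π*(n:ℝ))) ≤ x/(2*π*(n:ℝ)) - 1 :=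
      Real.log_le_sub_one_of_pos (by positivity)
    have h3 : x/(2*π*(n:ℝ)) - 1 = (x - 2*π*(n:ℝ))/(2*π*(n:ℝ)) := by field_simp
    have h4 : (x - 2*π*(n:ℝ))/(2*π*(n:ℝ)) ≤ (2*π)/(x/2) := by
      apply div_le_div₀ (by positivity) (by linarith) (by positivity) hhalf
    have h5 : (2*π)/(x/2) ≤ 14/x := by
      rw [div_le_div_iff₀ (by positivity) hx0]
      nlinarith [c_small]
    linarith
  have hlogx_le : Real.log x ≤ x := by
    nlinarith [Real.log_le_sub_one_of_pos hx0]
  have hsq : (Real.log x)^2 - (Real.log (2*π*(n:ℝ)))^2 ≤ 28 := by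
    have h1 : (Real.log x)^2 - (Real.log (2*π*(n:ℝ)))^2
        = (Real.log x - Real.log (2*π*(n:ℝ)))*(Real.log x + Real.log (2*π*(n:ℝ))) := by
      ring
    have h2 : (Real.log x - Real.log (2*π*(n:ℝ)))*(Real.log x + Real.log (2*π*(n:ℝ)))
        ≤ (14/x)*(2*Real.log x) := by
      apply mul_le_mul hlogdiff (by linarith) (by nlinarith) (by positivity)
    have h3 : 14/x*(2*Real.log x) = 28*(Real.log x/x) := by ring
    have h4 : Real.log x / x ≤ 1 := by
      rw [div_le_one hx0]; exact hlogx_le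
    linarith
  have hsq2 : (Real.log (2*π*(n:ℝ)))^2 ≤ (Real.log x)^2 := by nlinarith
  rw [abs_le]
  constructor
  · nlinarith [hdiff.1]
  · nlinarith [hdiff.2, c_small]

lemma mA_small (k : ℕ) (hk : k < 4) : mA k = 0 := by
  unfold mA
  rw [if_neg]
  rintro ⟨i, hi⟩
  have := kA_four i
  omega

lemma kA_asym (i : ℕ) (hi : 3 ≤ i) :
    |2*π*(kA i:ℝ)/Real.exp (Real.sqrt (2*π*i)) - 1| ≤ 2 * |1/(kA i:ℝ)| := by
  have hexp : Real.exp (Real.sqrt (2*π*(i:ℝ))) = 2*π*fA i := by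
    unfold fA; field_simp
  have hf6 : 6 < fA i := lt_of_lt_of_le fA_three (fA_mono hi)
  have hk1 : fA i ≤ (kA i:ℝ) := kA_ge_f i hi
  have hk2 : (kA i:ℝ) < fA i + 1 := kA_lt_f i hi
  have hk0 : (0:ℝ) < (kA i:ℝ) := by
    have := kA_four i
    exact_mod_cast (by omega : 0 < kA i)
  rw [hexp, mul_div_mul_left _ _ (ne_of_gt c_pos)]
  rw [abs_of_nonneg (by positivity : (0:ℝ) ≤ 1/(kA i:ℝ))]
  rw [abs_of_nonneg (by rw [sub_nonneg, le_div_iff₀ (fA_pos i)]; nlinarith)]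
  rw [div_sub' (ne_of_gt (fA_pos i)), mul_one, mul_one_div,
    div_le_div_iff₀ (fA_pos i) hk0]
  nlinarith

/-- There is a `{0,1}`-valued sequence `(m_k)` with `m₁ = m₂ = m₃ = 0` and infinitely
many `m_k = 1` such that the piecewise linear function `h` with `h(0)=0` and slope
`m_k` on `[2π(k−1), 2πk]` satisfies `h(x) = (log x)² + O(1)` as `x → ∞`, and the
indices `k_i` with `m_{k_i} = 1` satisfy `2πk_i = (1 + O(1/k_i))·e^{(2πi)^{1/2}}`. -/
theorem exists_slope_sequence_log_squared_growth :
    ∃ (m : ℕ → ℕ) (h : ℝ → ℝ) (kseq : ℕ → ℕ),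
      (∀ k, m k ≤ 1) ∧ m 1 = 0 ∧ m 2 = 0 ∧ m 3 = 0 ∧
      h 0 = 0 ∧
      (∀ k : ℕ, 1 ≤ k → ∀ x ∈ Set.Icc (2 * π * ((k : ℝ) - 1)) (2 * π * k),
        h x = h (2 * π * ((k : ℝ) - 1)) + (m k : ℝ) * (x - 2 * π * ((k : ℝ) - 1))) ∧
      ((fun x : ℝ => h x - (Real.log x) ^ 2) =O[atTop] fun _ : ℝ => (1 : ℝ)) ∧
      StrictMono kseq ∧
      (∀ i, 1 ≤ kseq i ∧ m (kseq i) = 1) ∧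
      (∀ k, 1 ≤ k → m k = 1 → ∃ i, kseq i = k) ∧
      ((fun i : ℕ => 2 * π * (kseq i : ℝ) / Real.exp (Real.sqrt (2 * π * i)) - 1)
        =O[atTop] fun i : ℕ => 1 / (kseq i : ℝ)) := by
  refine ⟨mA, hA, kA, mA_le_one, mA_small 1 (by norm_num), mA_small 2 (by norm_num),
    mA_small 3 (by norm_num), hA_zero, fun k hk x hx => hA_piece k hk x hx, ?_,
    kA_mono, ?_, ?_, ?_⟩
  · rw [isBigO_iff]
    refine ⟨100, ?_⟩
    filter_upwards [eventually_ge_atTop (Real.exp 10)] with x hx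
    simpa [Real.norm_eq_abs] using main_bound x hx
  · intro i
    refine ⟨by have := kA_four i; omega, ?_⟩
    unfold mA
    rw [if_pos ⟨i, rfl⟩]
  · intro k _ hm
    by_cases h : ∃ i, kA i = k
    · exact h
    · exfalso; unfold mA at hm; rw [if_neg h] at hm; omega
  · rw [isBigO_iff]
    refine ⟨2, ?_⟩
    filter_upwards [eventually_ge_atTop 3] with i hi
    rw [Real.norm_eq_abs, Real.norm_eq_abs]
    exact kA_asym i hi
end

section
/- Let κ > 0 and μ = 2π(2π − i log κ)/(4π² + log²κ). Then Re(μ) > 0, and the principal power map p(z) = z^μ on ℂ∖ℝ_{≤0} satisfies p(x + i0) = p(κx − i0) for all x < 0 (the boundary values from the upper side at x match those from the lower side at κx); in particular when κ = 1, μ = 1 and p is the identity. -/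
open Real

/-- For `κ > 0` and `μ = 2π(2π − i log κ)/(4π² + log²κ)`, one has `Re μ > 0`, the
principal power `p(z) = z^μ` satisfies `p(x + i0) = p(κx − i0)` for `x < 0`
(i.e. `exp(μ(log|x| + iπ)) = exp(μ(log|κx| − iπ))`), and when `κ = 1`, `μ = 1`. -/
theorem spiral_gluing_power_map
    (κ : ℝ) (hκ : 0 < κ)
    (μ : ℂ)
    (hμ : μ = (2 * (π : ℂ) * (2 * (π : ℂ) - Complex.I * (Real.log κ : ℂ)))
        / (4 * (π : ℂ) ^ 2 + ((Real.log κ : ℝ) : ℂ) ^ 2)) :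
    0 < μ.re ∧
      (∀ x : ℝ, x < 0 →
        Complex.exp (μ * ((Real.log (-x) : ℂ) + (π : ℂ) * Complex.I))
          = Complex.exp (μ * ((Real.log (-(κ * x)) : ℂ) - (π : ℂ) * Complex.I))) ∧
      (κ = 1 → μ = 1) := by
  set L : ℝ := Real.log κ with hLdef
  have hDpos : (0:ℝ) < 4 * π ^ 2 + L ^ 2 := by positivity
  have hDC : (4 * (π : ℂ) ^ 2 + ((L : ℝ) : ℂ) ^ 2) = ((4 * π ^ 2 + L ^ 2 : ℝ) : ℂ) := by
    push_cast; ring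
  have hD0 : (4 * (π : ℂ) ^ 2 + ((L : ℝ) : ℂ) ^ 2) ≠ 0 := by
    rw [hDC]; exact_mod_cast hDpos.ne'
  refine ⟨?_, ?_, ?_⟩
  · have hre : μ.re = 4 * π ^ 2 / (4 * π ^ 2 + L ^ 2) := by
      rw [hμ, hDC, Complex.div_ofReal_re]
      simp [Complex.mul_re, Complex.sub_re, Complex.sub_im, Complex.mul_im]
      ring
    rw [hre]
    positivity
  · intro x hx
    have hlog : Real.log (-(κ * x)) = L + Real.log (-x) := by
      have : -(κ * x) = κ * (-x) := by ring
      rw [this, Real.log_mul hκ.ne' (by linarith)]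
    have hkey : μ * ((L : ℂ) - 2 * (π : ℂ) * Complex.I) = -(2 * (π : ℂ) * Complex.I) := by
      rw [hμ, div_mul_eq_mul_div, div_eq_iff hD0]
      have hI := Complex.I_sq
      ring_nf
      ring_nf at hI
      rw [hI]; ring
    have : μ * ((Real.log (-(κ * x)) : ℂ) - (π : ℂ) * Complex.I)
        = μ * ((Real.log (-x) : ℂ) + (π : ℂ) * Complex.I) + (-(2 * (π : ℂ) * Complex.I)) := by
      rw [← hkey, hlog]; push_cast; ring
    rw [this, Complex.exp_add]
    have : Complex.exp (-(2 * (π : ℂ) * Complex.I)) = 1 := by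
      rw [Complex.exp_neg, Complex.exp_two_pi_mul_I, inv_one]
    rw [this, mul_one]
  · intro h
    have hL0 : L = 0 := by rw [hLdef, h, Real.log_one]
    rw [hμ, hL0]
    have hπ : (π : ℂ) ≠ 0 := by exact_mod_cast Real.pi_ne_zero
    field_simp
    simp only [Complex.ofReal_zero]; ring
end
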